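/- Let H be a graph of treewidth at most w whose vertex-cover number exceeds 3k(w+1). Then H contains an induced matching M = {u₁v₁, …, u_k v_k} of size k such that for every i, neither u_i nor v_i is the center of a subdivided (2(w+1)+1)-star in H (i.e., ψ(u_i), ψ(v_i) ≤ 2(w+1)). -/

import Mathlib

/-- `M` is a matching in `G`. -/
def IsMatching' {V : Type*} (G : SimpleGraph V) (M : Finset (Sym2 V)) : Prop :=
  ↑M ⊆ G.edgeSet ∧ (M : Set (Sym2 V)).Pairwise fun e f => ∀ v, v ∈ e → v ∉ f

/-- The set of vertices covered by a set of edges. -/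
def MSupport {V : Type*} (M : Finset (Sym2 V)) : Set V := {v | ∃ e ∈ M, v ∈ e}

/-- `M` is an induced matching. -/
def IsInducedMatching {V : Type*} (G : SimpleGraph V) (M : Finset (Sym2 V)) : Prop :=
  IsMatching' G M ∧ ∀ e ∈ G.edgeSet, (∀ v ∈ e, v ∈ MSupport M) → e ∈ M

/-- `C` is a vertex cover of `G`. -/
def IsVertexCover {V : Type*} (G : SimpleGraph V) (C : Finset V) : Prop :=
  ∀ e ∈ G.edgeSet, ∃ v ∈ C, v ∈ e

/-- A subdivided `ℓ`-star centered at `v`. -/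
def HasSubdividedStar {V : Type*} (G : SimpleGraph V) (v : V) (ℓ : ℕ) : Prop :=
  ∃ a b : Fin ℓ → V,
    (∀ i, G.Adj v (a i)) ∧ (∀ i, G.Adj (a i) (b i)) ∧
    (∀ i, a i ≠ v) ∧ (∀ i, b i ≠ v) ∧
    Function.Injective a ∧ Function.Injective b ∧ ∀ i j, a i ≠ b j

/-- `G` has a tree decomposition of width at most `w`. -/
def HasTreeDecompWidth {V : Type*} (G : SimpleGraph V) (w : ℕ) : Prop :=
  ∃ (ι : Type) (T : SimpleGraph ι) (B : ι → Finset V),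
    T.IsTree ∧
    (∀ v : V, ∃ t, v ∈ B t) ∧
    (∀ e ∈ G.edgeSet, ∃ t, ∀ v ∈ e, v ∈ B t) ∧
    (∀ v : V, (T.induce {t | v ∈ B t}).Connected) ∧
    ∀ t, (B t).card ≤ w + 1


open SimpleGraph

namespace NiceMatching

variable {ι : Type} {T : SimpleGraph ι}

noncomputable local instance : DecidableEq ι := Classical.decEq ι

/-- The unique path between two vertices of a tree. -/
noncomputable def pa (hT : T.IsTree) (a b : ι) : T.Walk a b :=
  (hT.isConnected.preconnected a b).some.bypass

lemma pa_isPath (hT : T.IsTree) (a b : ι) : (pa hT a b).IsPath :=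
  SimpleGraph.Walk.bypass_isPath _

lemma path_eq (hT : T.IsTree) {a b : ι} (W : T.Walk a b) (hW : W.IsPath) :
    W = pa hT a b := by
  have := hT.IsAcyclic.path_unique ⟨W, hW⟩ ⟨pa hT a b, pa_isPath hT a b⟩
  exact congrArg Subtype.val this

lemma pa_subset_support (hT : T.IsTree) {a b : ι} (W : T.Walk a b) :
    (pa hT a b).support ⊆ W.support := by
  rw [← path_eq hT W.bypass W.bypass_isPath]
  exact W.support_bypass_subset

variable (hT : T.IsTree) (r : ι)

/-- depth of a node relative to root `r`. -/
noncomputable def depth (t : ι) : ℕ := (pa hT r t).length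

/-- `below t s` : `t` is on the path from the root to `s` (t is an ancestor of s). -/
def below (t s : ι) : Prop := t ∈ (pa hT r s).support

lemma below_refl (t : ι) : below hT r t t := SimpleGraph.Walk.end_mem_support _

lemma below_root (s : ι) : below hT r r s := SimpleGraph.Walk.start_mem_support _

lemma takeUntil_eq {t s : ι} (h : below hT r t s) :
    (pa hT r s).takeUntil t h = pa hT r t :=
  path_eq hT _ ((pa_isPath hT r s).takeUntil h)

lemma below_trans {a b c : ι} (hab : below hT r a b) (hbc : below hT r b c) :
    below hT r a c := by
  have := SimpleGraph.Walk.support_takeUntil_subset (pa hT r c) hbc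
  rw [takeUntil_eq hT r hbc] at this
  exact this hab

lemma depth_le_of_below {a b : ι} (h : below hT r a b) :
    depth hT r a ≤ depth hT r b := by
  have := SimpleGraph.Walk.length_takeUntil_le (pa hT r b) h
  rwa [takeUntil_eq hT r h] at this

lemma length_split {a b : ι} (h : below hT r a b) :
    depth hT r b = depth hT r a + ((pa hT r b).dropUntil a h).length := by
  conv_lhs => rw [depth, ← SimpleGraph.Walk.take_spec (pa hT r b) h]
  rw [SimpleGraph.Walk.length_append, takeUntil_eq hT r h]
  rfl

lemma eq_of_below_of_depth_le {a b : ι} (h : below hT r a b)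
    (hd : depth hT r b ≤ depth hT r a) : a = b := by
  have hs := length_split hT r h
  have h0 : ((pa hT r b).dropUntil a h).length = 0 := by omega
  exact SimpleGraph.Walk.eq_of_length_eq_zero h0

end NiceMatching

namespace NiceMatching
variable {ι : Type} {T : SimpleGraph ι}
noncomputable local instance : DecidableEq ι := Classical.decEq ι
variable (hT : T.IsTree) (r : ι)

lemma isPath_concat {a b c : ι} {p : T.Walk a b} (hp : p.IsPath) (h : T.Adj b c)
    (hc : c ∉ p.support) : (p.concat h).IsPath := by
  rw [← SimpleGraph.Walk.isPath_reverse_iff, SimpleGraph.Walk.reverse_concat]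
  exact SimpleGraph.Walk.IsPath.cons hp.reverse
    (by simpa [SimpleGraph.Walk.support_reverse] using hc)

lemma adj_depth {s c : ι} (h : T.Adj s c) :
    (below hT r s c ∧ depth hT r c = depth hT r s + 1) ∨
    (below hT r c s ∧ depth hT r s = depth hT r c + 1) := by
  by_cases hc : c ∈ (pa hT r s).support
  · right
    refine ⟨hc, ?_⟩
    have h2 : (SimpleGraph.Walk.cons h.symm SimpleGraph.Walk.nil : T.Walk c s).IsPath := by
      simp [h.ne']
    have hdrop : (pa hT r s).dropUntil c hc
        = SimpleGraph.Walk.cons h.symm SimpleGraph.Walk.nil := by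
      rw [path_eq hT _ ((pa_isPath hT r s).dropUntil hc), path_eq hT _ h2]
    have hls := length_split hT r hc
    rw [hdrop] at hls
    simpa using hls
  · left
    have hpath : ((pa hT r s).concat h).IsPath := isPath_concat (pa_isPath hT r s) h hc
    have hEq : pa hT r c = (pa hT r s).concat h := (path_eq hT _ hpath).symm
    constructor
    · show s ∈ (pa hT r c).support
      rw [hEq, SimpleGraph.Walk.support_concat]
      simp
    · show (pa hT r c).length = _
      rw [hEq, SimpleGraph.Walk.length_concat]; rfl

end NiceMatching

namespace NiceMatching
variable {ι : Type} {T : SimpleGraph ι}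
noncomputable local instance : DecidableEq ι := Classical.decEq ι
variable (hT : T.IsTree) (r : ι)

lemma below_total {a b c : ι} (ha : below hT r a c) (hb : below hT r b c) :
    below hT r a b ∨ below hT r b a := by
  have hqp : (pa hT r c).IsPath := pa_isPath hT r c
  have hsplit := (pa hT r c).take_spec ha
  have hb' : b ∈ ((pa hT r c).takeUntil a ha).support ∨
      b ∈ ((pa hT r c).dropUntil a ha).support := by
    rw [← SimpleGraph.Walk.mem_support_append_iff, hsplit]; exact hb
  rcases hb' with hb1 | hb2
  · right; rw [takeUntil_eq hT r ha] at hb1; exact hb1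
  · left
    set d := (pa hT r c).dropUntil a ha with hd
    have hdp : d.IsPath := hqp.dropUntil ha
    have hnodup : (((pa hT r c).takeUntil a ha).support ++ d.support.tail).Nodup := by
      rw [← SimpleGraph.Walk.support_append, hsplit]; exact hqp.support_nodup
    obtain ⟨h1, h2', hdisj⟩ := List.nodup_append.1 hnodup
    have hnd : (((pa hT r c).takeUntil a ha).append (d.takeUntil b hb2)).support.Nodup := by
      rw [SimpleGraph.Walk.support_append]
      refine List.nodup_append.2 ⟨h1, ((hdp.takeUntil hb2).support_nodup).tail, ?_⟩
      intro x hx y hx2 hxy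
      subst hxy
      refine hdisj x hx x ?_ rfl
      have hxs : x ∈ (d.takeUntil b hb2).support := List.mem_of_mem_tail hx2
      have hxd' : x ∈ d.support := d.support_takeUntil_subset hb2 hxs
      have hxa : x ≠ a := by
        intro hxe; subst hxe
        have hnod := (hdp.takeUntil hb2).support_nodup
        rw [SimpleGraph.Walk.support_eq_cons] at hnod
        exact (List.nodup_cons.1 hnod).1 hx2
      rw [SimpleGraph.Walk.support_eq_cons d] at hxd'
      rcases List.mem_cons.1 hxd' with h | h
      · exact absurd h hxa
      · exact h
    have hpath : (((pa hT r c).takeUntil a ha).append (d.takeUntil b hb2)).IsPath :=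
      (SimpleGraph.Walk.isPath_def _).2 hnd
    have hEq := path_eq hT _ hpath
    show a ∈ (pa hT r b).support
    rw [← hEq, SimpleGraph.Walk.mem_support_append_iff]
    exact Or.inl (SimpleGraph.Walk.end_mem_support _)

end NiceMatching

namespace NiceMatching
variable {ι : Type} {T : SimpleGraph ι}
noncomputable local instance : DecidableEq ι := Classical.decEq ι
variable (hT : T.IsTree) (r : ι)

lemma succ_base {t s : ι} (hmem : below hT r t s) (hts : t ≠ s) :
    ∃ c, T.Adj t c ∧ below hT r t c ∧ depth hT r c = depth hT r t + 1 ∧ below hT r c s ∧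
      ∃ W : T.Walk c s, t ∉ W.support := by
  have hdp : ((pa hT r s).dropUntil t hmem).IsPath := (pa_isPath hT r s).dropUntil hmem
  obtain ⟨c, hadj, tail, hE⟩ :=
    SimpleGraph.Walk.exists_eq_cons_of_ne hts ((pa hT r s).dropUntil t hmem)
  have htail_t : t ∉ tail.support := by
    have h2 := hdp; rw [hE] at h2
    exact ((SimpleGraph.Walk.cons_isPath_iff _ _).1 h2).2
  have hcs : c ∈ (pa hT r s).support := by
    refine (pa hT r s).support_dropUntil_subset hmem ?_
    rw [hE]; simp
  have hbtc : below hT r t c := by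
    rcases adj_depth hT r hadj with ⟨h1, _⟩ | ⟨h1, _⟩
    · exact h1
    · exfalso
      -- c ∈ pa r t = takeUntil, and c ∈ tail of dropUntil: contradicts nodup
      have hnodup : (((pa hT r s).takeUntil t hmem).support
          ++ ((pa hT r s).dropUntil t hmem).support.tail).Nodup := by
        rw [← SimpleGraph.Walk.support_append, (pa hT r s).take_spec hmem]
        exact (pa_isPath hT r s).support_nodup
      obtain ⟨_, _, hdisj⟩ := List.nodup_append.1 hnodup
      have hc1 : c ∈ ((pa hT r s).takeUntil t hmem).support := by
        rw [takeUntil_eq hT r hmem]; exact h1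
      have hc2 : c ∈ ((pa hT r s).dropUntil t hmem).support.tail := by
        rw [hE]; simp [SimpleGraph.Walk.support_cons]
      exact hdisj c hc1 c hc2 rfl
  rcases adj_depth hT r hadj with ⟨_, hdep⟩ | ⟨h1, _⟩
  · exact ⟨c, hadj, hbtc, hdep, hcs, tail, htail_t⟩
  · exfalso
    have := eq_of_below_of_depth_le hT r hbtc (depth_le_of_below hT r h1)
    exact hadj.ne this

include hT in
lemma succ_unique {t c c' s s' : ι} (hc : T.Adj t c) (hc' : T.Adj t c')
    (Wc : T.Walk c s) (hWc : t ∉ Wc.support) (Wc' : T.Walk c' s') (hWc' : t ∉ Wc'.support)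
    (W : T.Walk s s') (hW : t ∉ W.support) : c = c' := by
  by_contra hne
  set Wcc : T.Walk c c' := Wc.append (W.append Wc'.reverse) with hWcc
  have hWt : t ∉ Wcc.support := by
    rw [hWcc, SimpleGraph.Walk.mem_support_append_iff,
      SimpleGraph.Walk.mem_support_append_iff, SimpleGraph.Walk.support_reverse]
    push_neg
    exact ⟨hWc, hW, by simpa using hWc'⟩
  have hbyp : t ∉ Wcc.bypass.support := fun hx => hWt (Wcc.support_bypass_subset hx)
  have hP2 : (SimpleGraph.Walk.cons hc Wcc.bypass).IsPath :=
    SimpleGraph.Walk.IsPath.cons Wcc.bypass_isPath hbyp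
  have hP1 : (SimpleGraph.Walk.cons hc' SimpleGraph.Walk.nil : T.Walk t c').IsPath := by
    simp [hc'.ne]
  have hEq := (path_eq hT _ hP2).trans (path_eq hT _ hP1).symm
  have hsup := congrArg SimpleGraph.Walk.support hEq
  simp only [SimpleGraph.Walk.support_cons, SimpleGraph.Walk.support_nil] at hsup
  have : c ∈ Wcc.bypass.support := SimpleGraph.Walk.start_mem_support _
  rw [List.cons_eq_cons.1 hsup |>.2] at this
  simp at this
  exact hne this

lemma walk_below {SS : Set ι} {t' : ι} (hmin : ∀ u ∈ SS, depth hT r t' ≤ depth hT r u) :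
    ∀ {z z' : ι} (W : T.Walk z z'), (∀ u ∈ W.support, u ∈ SS) → below hT r t' z →
      below hT r t' z' := by
  intro z z' W
  induction W with
  | nil => exact fun _ h => h
  | @cons u v w hadj W ih =>
    intro hsup hb
    refine ih (fun x hx => hsup x (by simp [SimpleGraph.Walk.support_cons, hx])) ?_
    rcases adj_depth hT r hadj with ⟨h1, _⟩ | ⟨h1, hd⟩
    · exact below_trans hT r hb h1
    · -- v is the parent of u; t' and v both ancestors of u
      rcases below_total hT r hb h1 with h2 | h2
      · exact h2
      · have hv : v ∈ SS := by
          refine hsup v ?_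
          simp [SimpleGraph.Walk.support_cons, SimpleGraph.Walk.start_mem_support]
        have h3 := eq_of_below_of_depth_le hT r h2 (hmin v hv)
        rw [h3]
        exact below_refl hT r t'

lemma topNode {SS : Set ι} (hne : SS.Nonempty)
    (hconn : ∀ s ∈ SS, ∀ s' ∈ SS, ∀ u ∈ (pa hT s s').support, u ∈ SS) :
    ∃ t' ∈ SS, ∀ s ∈ SS, below hT r t' s := by
  obtain ⟨s₀, hs₀⟩ := hne
  have hA : (Set.range fun p : SS => depth hT r p.1).Nonempty := ⟨_, ⟨⟨s₀, hs₀⟩, rfl⟩⟩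
  obtain ⟨⟨t', ht'⟩, hn⟩ := Nat.sInf_mem hA
  refine ⟨t', ht', fun s hs => ?_⟩
  have hmin : ∀ u ∈ SS, depth hT r t' ≤ depth hT r u := by
    intro u hu
    have hle : sInf (Set.range fun p : SS => depth hT r p.1) ≤ depth hT r u :=
      Nat.sInf_le ⟨⟨u, hu⟩, rfl⟩
    have hn2 : depth hT r t' = sInf (Set.range fun p : SS => depth hT r p.1) := hn
    omega
  exact walk_below hT r hmin (pa hT t' s) (fun u hu => hconn t' ht' s hs u hu)
    (below_refl hT r t')

end NiceMatching

namespace NiceMatching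
variable {ι : Type} {T : SimpleGraph ι}
noncomputable local instance : DecidableEq ι := Classical.decEq ι
variable (hT : T.IsTree) (r : ι)

lemma separation {t s s' : ι} (hs : below hT r t s) (hs' : ¬ below hT r t s')
    (W : T.Walk s s') : t ∈ W.support := by
  have hsub := pa_subset_support hT ((pa hT r s').append W.reverse)
  have ht := hsub hs
  rw [SimpleGraph.Walk.mem_support_append_iff] at ht
  rcases ht with h | h
  · exact absurd h hs'
  · rwa [SimpleGraph.Walk.support_reverse, List.mem_reverse] at h

variable {V : Type*} {H : SimpleGraph V}

/-- Tree-decomposition data in convenient form. -/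
structure TDc (H : SimpleGraph V) (w : ℕ) (T : SimpleGraph ι) (B : ι → Finset V)
    (hT : T.IsTree) : Prop where
  bag : ∀ v : V, ∃ t, v ∈ B t
  edge : ∀ x y : V, H.Adj x y → ∃ s, x ∈ B s ∧ y ∈ B s
  conn : ∀ (x : V) (s s' : ι), x ∈ B s → x ∈ B s' → ∀ u ∈ (pa hT s s').support, x ∈ B u
  size : ∀ t, (B t).card ≤ w + 1

variable {B : ι → Finset V} {w : ℕ}

/-- `x`'s bags all lie in the subtree below `t`. -/
def Subt (B : ι → Finset V) (hT : T.IsTree) (r t : ι) (x : V) : Prop :=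
  ∀ s, x ∈ B s → below hT r t s

/-- some bag of `x` lies in the subtree below `t`. -/
def Touch (B : ι → Finset V) (hT : T.IsTree) (r t : ι) (x : V) : Prop :=
  ∃ s, x ∈ B s ∧ below hT r t s

lemma sub_of_touch (D : TDc H w T B hT) {t : ι} {x : V}
    (h : Touch B hT r t x) (hx : x ∉ B t) : Subt B hT r t x := by
  obtain ⟨s, hxs, hbs⟩ := h
  intro s' hxs'
  by_contra hb
  exact hx (D.conn x s s' hxs hxs' t (separation hT r hbs hb (pa hT s s')))

lemma touch_of_sub_adj (D : TDc H w T B hT) {t : ι} {x y : V}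
    (h : Subt B hT r t x) (hadj : H.Adj x y) : Touch B hT r t y := by
  obtain ⟨s, hxs, hys⟩ := D.edge x y hadj
  exact ⟨s, hys, h s hxs⟩

lemma touch_of_sub (D : TDc H w T B hT) {t : ι} {x : V} (h : Subt B hT r t x) :
    Touch B hT r t x := by
  obtain ⟨s, hs⟩ := D.bag x
  exact ⟨s, hs, h s hs⟩

lemma topNodeV (D : TDc H w T B hT) (x : V) :
    ∃ t', x ∈ B t' ∧ Subt B hT r t' x := by
  obtain ⟨t', ht', hall⟩ := topNode hT r (SS := {s | x ∈ B s}) (D.bag x)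
    (fun s hs s' hs' u hu => D.conn x s s' hs hs' u hu)
  exact ⟨t', ht', fun s hs => hall s hs⟩

lemma child (D : TDc H w T B hT) {t : ι} {x y : V} (hadj : H.Adj x y)
    (hx : Subt B hT r t x) (hy : Subt B hT r t y) (hxB : x ∉ B t) (hyB : y ∉ B t) :
    ∃ c, depth hT r c = depth hT r t + 1 ∧ Subt B hT r c x ∧ Subt B hT r c y := by
  obtain ⟨s₀, hxs₀, hys₀⟩ := D.edge x y hadj
  have hbs₀ : below hT r t s₀ := hx s₀ hxs₀
  have hts₀ : t ≠ s₀ := fun h => hxB (h ▸ hxs₀)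
  obtain ⟨c, hadjc, hbtc, hdc, hcs₀, Wc, hWc⟩ := succ_base hT r hbs₀ hts₀
  refine ⟨c, hdc, ?_, ?_⟩ <;> intro s hs
  · -- s is a bag of x
    have hbts : below hT r t s := hx s hs
    have htss : t ≠ s := fun h => hxB (h ▸ hs)
    obtain ⟨c', hadjc', hbtc', hdc', hcs, Wc', hWc'⟩ := succ_base hT r hbts htss
    have hWmid : t ∉ (pa hT s₀ s).support := fun hmem =>
      hxB (D.conn x s₀ s hxs₀ hs t hmem)
    have : c = c' := succ_unique hT hadjc hadjc' Wc hWc Wc' hWc' (pa hT s₀ s) hWmid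
    rw [this]; exact hcs
  · have hbts : below hT r t s := hy s hs
    have htss : t ≠ s := fun h => hyB (h ▸ hs)
    obtain ⟨c', hadjc', hbtc', hdc', hcs, Wc', hWc'⟩ := succ_base hT r hbts htss
    have hW1 : t ∉ (pa hT s₀ s).support := by
      intro hmem
      exact hyB (D.conn y s₀ s hys₀ hs t hmem)
    have : c = c' := succ_unique hT hadjc hadjc' Wc hWc Wc' hWc' (pa hT s₀ s) hW1
    rw [this]; exact hcs

end NiceMatching


namespace NiceMatching
open scoped Classical

variable {ι : Type} {T : SimpleGraph ι}
noncomputable local instance : DecidableEq ι := Classical.decEq ι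
variable {V : Type*} {H : SimpleGraph V} {B : ι → Finset V} {w k : ℕ}
variable (hT : T.IsTree) (r : ι)

/-- `x` is dead: some bag of `x` lies in a wiped subtree. -/
def DeadP (B : ι → Finset V) (hT : T.IsTree) (r : ι) (R : Finset ι) (x : V) : Prop :=
  ∃ t ∈ R, Touch B hT r t x

/-- maximal wipe roots. -/
noncomputable def MaxRt (hT : T.IsTree) (r : ι) (R : Finset ι) : Finset ι :=
  R.filter (fun t => ∀ t' ∈ R, below hT r t' t → t' = t)

/-- `t` carries a live edge. -/
def CarrierP (H : SimpleGraph V) (B : ι → Finset V) (hT : T.IsTree) (r : ι)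
    (R : Finset ι) (t : ι) : Prop :=
  ∃ x y, H.Adj x y ∧ ¬ DeadP B hT r R x ∧ ¬ DeadP B hT r R y ∧
    Subt B hT r t x ∧ Subt B hT r t y

def goodV (H : SimpleGraph V) (w : ℕ) (x : V) : Prop :=
  ¬ HasSubdividedStar H x (2*(w+1)+1)

def clo (H : SimpleGraph V) (q : V × V) (z : V) : Prop :=
  z = q.1 ∨ z = q.2 ∨ H.Adj q.1 z ∨ H.Adj q.2 z

def rel2 (H : SimpleGraph V) (p q : V × V) : Prop :=
  ¬ clo H q p.1 ∧ ¬ clo H q p.2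

lemma touch_mono {t t' : ι} {x : V} (hb : below hT r t t') (h : Touch B hT r t' x) :
    Touch B hT r t x := by
  obtain ⟨s, hs, hbs⟩ := h
  exact ⟨s, hs, below_trans hT r hb hbs⟩

lemma maxr_subset (R : Finset ι) : MaxRt hT r R ⊆ R := Finset.filter_subset _ _

lemma maxr_exists {R : Finset ι} {t' : ι} (h : t' ∈ R) :
    ∃ t ∈ MaxRt hT r R, below hT r t t' := by
  have hne : (R.filter (fun t => below hT r t t')).Nonempty :=
    ⟨t', Finset.mem_filter.2 ⟨h, below_refl hT r t'⟩⟩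
  obtain ⟨t, htmem, htmin⟩ := Finset.exists_min_image _ (fun t => depth hT r t) hne
  obtain ⟨htR, htb⟩ := Finset.mem_filter.1 htmem
  refine ⟨t, Finset.mem_filter.2 ⟨htR, ?_⟩, htb⟩
  intro t'' ht''R hbt''
  have ht''f : t'' ∈ R.filter (fun t => below hT r t t') :=
    Finset.mem_filter.2 ⟨ht''R, below_trans hT r hbt'' htb⟩
  have h1 := htmin t'' ht''f
  have h2 := depth_le_of_below hT r hbt''
  exact eq_of_below_of_depth_le hT r hbt'' (le_antisymm h2 h1 ▸ le_refl _)

lemma dead_max {R : Finset ι} {x : V} (h : DeadP B hT r R x) :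
    ∃ t ∈ MaxRt hT r R, Touch B hT r t x := by
  obtain ⟨t', ht'R, htouch⟩ := h
  obtain ⟨t, htM, hb⟩ := maxr_exists hT r ht'R
  exact ⟨t, htM, touch_mono hT r hb htouch⟩

lemma maxr_insert {R : Finset ι} {t : ι} :
    MaxRt hT r (insert t R) ⊆ insert t (MaxRt hT r R) := by
  intro t'' h
  obtain ⟨hmem, hmaxi⟩ := Finset.mem_filter.1 h
  rcases Finset.mem_insert.1 hmem with rfl | hR
  · exact Finset.mem_insert_self _ _
  · refine Finset.mem_insert_of_mem (Finset.mem_filter.2 ⟨hR, ?_⟩)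
    intro t' ht' hb
    exact hmaxi t' (Finset.mem_insert_of_mem ht') hb

end NiceMatching

namespace NiceMatching
open scoped Classical
variable {ι : Type} {T : SimpleGraph ι}
noncomputable local instance : DecidableEq ι := Classical.decEq ι
variable {V : Type*} {H : SimpleGraph V} {B : ι → Finset V} {w k : ℕ}
variable (hT : T.IsTree) (r : ι)

noncomputable local instance : DecidableEq V := Classical.decEq V

lemma good_center (D : TDc H w T B hT) (R : Finset ι) (tstar : ι)
    (hmax : ∀ t, CarrierP H B hT r R t → depth hT r t ≤ depth hT r tstar)
    (hRB : (((MaxRt hT r R)).filter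
      (fun q => below hT r tstar q ∧ q ≠ tstar)).card ≤ 1)
    {x : V} (hlive : ¬ DeadP B hT r R x) (hsub : Subt B hT r tstar x) :
    goodV H w x := by
  rintro ⟨a, b, hva, hab, hane, hbne, hainj, hbinj, hanb⟩
  obtain ⟨t', hxt', hsubt'⟩ := topNodeV hT r D x
  have hbt' : below hT r tstar t' := hsub t' hxt'
  set RB := ((MaxRt hT r R)).filter (fun q => below hT r tstar q ∧ q ≠ tstar) with hRBdef
  set Z : Finset V := (B t').erase x ∪ RB.biUnion B with hZ
  have hZcard : Z.card ≤ 2*w + 1 := by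
    have h1 : ((B t').erase x).card ≤ w := by
      have := Finset.card_erase_of_mem hxt'
      have := D.size t'
      omega
    have h2 : (RB.biUnion B).card ≤ w + 1 := by
      refine le_trans (Finset.card_biUnion_le) ?_
      refine le_trans (Finset.sum_le_card_nsmul _ _ (w+1) (fun q _ => D.size q)) ?_
      have : RB.card • (w+1) ≤ 1 * (w+1) := by
        rw [smul_eq_mul]; exact Nat.mul_le_mul_right _ hRB
      omega
    have h3 : Z.card ≤ ((B t').erase x).card + (RB.biUnion B).card := by
      rw [hZ]; exact Finset.card_union_le _ _
    omega
  have key : ∀ i : Fin (2*(w+1)+1), a i ∈ Z ∨ b i ∈ Z := by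
    intro i
    by_cases ha1 : a i ∈ B t'
    · exact Or.inl (Finset.mem_union_left _ (Finset.mem_erase.2 ⟨hane i, ha1⟩))
    · have hta : Touch B hT r t' (a i) := touch_of_sub_adj hT r D hsubt' (hva i)
      have hsa : Subt B hT r t' (a i) := sub_of_touch hT r D hta ha1
      by_cases hb1 : b i ∈ B t'
      · exact Or.inr (Finset.mem_union_left _ (Finset.mem_erase.2 ⟨hbne i, hb1⟩))
      · have htb : Touch B hT r t' (b i) := touch_of_sub_adj hT r D hsa (hab i)
        have hsb : Subt B hT r t' (b i) := sub_of_touch hT r D htb hb1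
        by_cases hda : DeadP B hT r R (a i)
        · obtain ⟨q, hqM, hqT⟩ := dead_max hT r hda
          have haq : a i ∈ B q := by
            by_contra hq
            have hsq : Subt B hT r q (a i) := sub_of_touch hT r D hqT hq
            obtain ⟨s, hxs, has⟩ := D.edge x (a i) (hva i)
            exact hlive ⟨q, maxr_subset hT r R hqM, ⟨s, hxs, hsq s has⟩⟩
          have hbq : below hT r t' q := hsa q haq
          have hqne : q ≠ t' := fun h => ha1 (h ▸ haq)
          have hqRB : q ∈ RB := by
            refine Finset.mem_filter.2 ⟨hqM, below_trans hT r hbt' hbq, ?_⟩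
            intro h
            apply hqne
            rw [h] at hbq
            exact (eq_of_below_of_depth_le hT r hbt'
              (depth_le_of_below hT r hbq)) ▸ h
          exact Or.inl (Finset.mem_union_right _ (Finset.mem_biUnion.2 ⟨q, hqRB, haq⟩))
        · by_cases hdb : DeadP B hT r R (b i)
          · obtain ⟨q, hqM, hqT⟩ := dead_max hT r hdb
            have hbqmem : b i ∈ B q := by
              by_contra hq
              have hsq : Subt B hT r q (b i) := sub_of_touch hT r D hqT hq
              obtain ⟨s, hasmem, hbs⟩ := D.edge (a i) (b i) (hab i)
              exact hda ⟨q, maxr_subset hT r R hqM, ⟨s, hasmem, hsq s hbs⟩⟩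
            have hbq : below hT r t' q := hsb q hbqmem
            have hqne : q ≠ t' := fun h => hb1 (h ▸ hbqmem)
            have hqRB : q ∈ RB := by
              refine Finset.mem_filter.2 ⟨hqM, below_trans hT r hbt' hbq, ?_⟩
              intro h
              apply hqne
              rw [h] at hbq
              exact (eq_of_below_of_depth_le hT r hbt'
                (depth_le_of_below hT r hbq)) ▸ h
            exact Or.inr (Finset.mem_union_right _ (Finset.mem_biUnion.2 ⟨q, hqRB, hbqmem⟩))
          · exfalso
            obtain ⟨c, hdc, hcx, hcy⟩ := child hT r D (hab i) hsa hsb ha1 hb1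
            have hc : CarrierP H B hT r R c := ⟨a i, b i, hab i, hda, hdb, hcx, hcy⟩
            have h1 := hmax c hc
            have h2 : depth hT r tstar ≤ depth hT r t' := depth_le_of_below hT r hbt'
            omega
  -- injectivity and counting
  set f : Fin (2*(w+1)+1) → V := fun i => if a i ∈ Z then a i else b i with hf
  have hfZ : ∀ i, f i ∈ Z := by
    intro i
    simp only [hf]
    split_ifs with h
    · exact h
    · rcases key i with h1 | h1
      · exact absurd h1 h
      · exact h1
  have hfinj : Function.Injective f := by
    intro i j hij
    by_contra hne
    have hia : f i = a i ∨ f i = b i := by simp only [hf]; split_ifs <;> simp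
    have hja : f j = a j ∨ f j = b j := by simp only [hf]; split_ifs <;> simp
    rcases hia with h1 | h1 <;> rcases hja with h2 | h2 <;> rw [h1, h2] at hij
    · exact hne (hainj hij)
    · exact hanb i j hij
    · exact hanb j i hij.symm
    · exact hne (hbinj hij)
  have hcard := Finset.card_le_card_of_injOn (s := (Finset.univ : Finset (Fin (2*(w+1)+1))))
    (t := Z) f (fun i _ => hfZ i) (hfinj.injOn)
  simp only [Finset.card_univ, Fintype.card_fin] at hcard
  omega

end NiceMatching

namespace NiceMatching
open scoped Classical
variable {ι : Type} {T : SimpleGraph ι}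
noncomputable local instance : DecidableEq ι := Classical.decEq ι
variable {V : Type*} {H : SimpleGraph V} {B : ι → Finset V} {w k : ℕ}
variable (hT : T.IsTree) (r : ι)

lemma process [Fintype V] (D : TDc H w T B hT)
    (hvc : ∀ C : Finset V, _root_.IsVertexCover H C → 3 * k * (w + 1) < C.card) :
    ∀ (n : ℕ) (R : Finset ι) (C : Finset V) (M : List (V × V)),
    (Finset.univ.filter (fun z : V => ¬ DeadP B hT r R z)).card ≤ n →
    (∀ x y : V, H.Adj x y → DeadP B hT r R x → x ∈ C ∨ y ∈ C) →
    C.card + (w+1) * (MaxRt hT r R).card ≤ 3*(w+1)*M.length →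
    M.length ≤ k →
    (∀ p ∈ M, H.Adj p.1 p.2 ∧ goodV H w p.1 ∧ goodV H w p.2) →
    (∀ p ∈ M, ∀ z : V, clo H p z → DeadP B hT r R z) →
    M.Pairwise (rel2 H) →
    ∃ M' : List (V × V), M'.length = k ∧
      (∀ p ∈ M', H.Adj p.1 p.2 ∧ goodV H w p.1 ∧ goodV H w p.2) ∧
      M'.Pairwise (rel2 H) := by
  intro n
  induction n using Nat.strong_induction_on with
  | _ n IH =>
  intro R C M hn hI1 hI2 hlen hgood hclo hpair
  by_cases hlenk : M.length = k
  · exact ⟨M, hlenk, hgood, hpair⟩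
  have hlt : M.length < k := lt_of_le_of_ne hlen hlenk
  have hCnc : ¬ _root_.IsVertexCover H C := by
    intro hC
    have h1 := hvc C hC
    have h2 : C.card ≤ 3*(w+1)*M.length := le_trans (Nat.le_add_right _ _) hI2
    have h3 : 3*(w+1)*(M.length+1) ≤ 3*(w+1)*k := Nat.mul_le_mul_left _ (by omega)
    nlinarith [h1, h2, h3]
  obtain ⟨x, y, hadj, hlx, hly⟩ :
      ∃ x y : V, H.Adj x y ∧ ¬ DeadP B hT r R x ∧ ¬ DeadP B hT r R y := by
    rw [_root_.IsVertexCover] at hCnc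
    push_neg at hCnc
    obtain ⟨e, he, hnc⟩ := hCnc
    revert he hnc
    refine e.inductionOn ?_
    intro x y he hnc
    have hadj : H.Adj x y := (SimpleGraph.mem_edgeSet H).mp he
    refine ⟨x, y, hadj, ?_, ?_⟩
    · intro hd
      rcases hI1 x y hadj hd with h | h
      · exact (hnc x h) (by simp)
      · exact (hnc y h) (by simp)
    · intro hd
      rcases hI1 y x hadj.symm hd with h | h
      · exact (hnc y h) (by simp)
      · exact (hnc x h) (by simp)
  -- pick deepest live carrier
  have hbnd : ∀ t, CarrierP H B hT r R t → depth hT r t ≤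
      Finset.univ.sup (fun v : V => depth hT r (Classical.choose (D.bag v))) := by
    rintro t ⟨x', y', haxy, hlx', hly', hsx', hsy'⟩
    have hb := hsx' _ (Classical.choose_spec (D.bag x'))
    exact le_trans (depth_le_of_below hT r hb)
      (Finset.le_sup (f := fun v : V => depth hT r (Classical.choose (D.bag v)))
        (Finset.mem_univ x'))
  have hAne : {m | ∃ t, CarrierP H B hT r R t ∧ depth hT r t = m}.Nonempty :=
    ⟨depth hT r r, r, ⟨x, y, hadj, hlx, hly,
      fun s _ => below_root hT r s, fun s _ => below_root hT r s⟩, rfl⟩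
  have hAbdd : BddAbove {m | ∃ t, CarrierP H B hT r R t ∧ depth hT r t = m} := by
    refine ⟨Finset.univ.sup (fun v : V => depth hT r (Classical.choose (D.bag v))), ?_⟩
    rintro m ⟨t, hct, hdt⟩
    exact hdt ▸ hbnd t hct
  obtain ⟨tstar, hcar, hdstar⟩ := Nat.sSup_mem hAne hAbdd
  have hmax : ∀ t, CarrierP H B hT r R t → depth hT r t ≤ depth hT r tstar := by
    intro t hct
    have h5 := le_csSup hAbdd
      (⟨t, hct, rfl⟩ : depth hT r t ∈ {m | ∃ t, CarrierP H B hT r R t ∧ depth hT r t = m})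
    omega
  obtain ⟨u, v', hauv, hlu, hlv, hsu, hsv⟩ := hcar
  set R' := insert tstar R with hR'
  set C' := C ∪ B tstar with hC'
  have hdeadmono : ∀ z, DeadP B hT r R z → DeadP B hT r R' z := by
    rintro z ⟨t, ht, htz⟩; exact ⟨t, Finset.mem_insert_of_mem ht, htz⟩
  have hI1' : ∀ xx yy : V, H.Adj xx yy → DeadP B hT r R' xx → xx ∈ C' ∨ yy ∈ C' := by
    intro xx yy haxy hdead
    have hCsub : ∀ z ∈ C, z ∈ C' := fun z hz => Finset.mem_union_left _ hz
    by_cases hdx : DeadP B hT r R xx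
    · rcases hI1 xx yy haxy hdx with h | h
      · exact Or.inl (hCsub _ h)
      · exact Or.inr (hCsub _ h)
    obtain ⟨t'', ht''mem, htouch⟩ := hdead
    rcases Finset.mem_insert.1 ht''mem with rfl | hR
    swap
    · exact absurd ⟨t'', hR, htouch⟩ hdx
    by_cases hxB : xx ∈ B t''
    · exact Or.inl (Finset.mem_union_right _ hxB)
    have hsx := sub_of_touch hT r D htouch hxB
    by_cases hdy : DeadP B hT r R yy
    · rcases hI1 yy xx haxy.symm hdy with h | h
      · exact Or.inr (hCsub _ h)
      · exact Or.inl (hCsub _ h)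
    by_cases hyB : yy ∈ B t''
    · exact Or.inr (Finset.mem_union_right _ hyB)
    have hty : Touch B hT r t'' yy := touch_of_sub_adj hT r D hsx haxy
    have hsy := sub_of_touch hT r D hty hyB
    exfalso
    obtain ⟨c, hdc, hcx, hcy⟩ := child hT r D haxy hsx hsy hxB hyB
    have := hmax c ⟨xx, yy, haxy, hdx, hdy, hcx, hcy⟩
    omega
  have hlive_dec : (Finset.univ.filter (fun z : V => ¬ DeadP B hT r R' z)).card <
      (Finset.univ.filter (fun z : V => ¬ DeadP B hT r R z)).card := by
    apply Finset.card_lt_card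
    rw [Finset.ssubset_iff_of_subset]
    · refine ⟨u, Finset.mem_filter.2 ⟨Finset.mem_univ u, hlu⟩, ?_⟩
      simp only [Finset.mem_filter, not_and, not_not]
      intro _
      exact ⟨tstar, Finset.mem_insert_self _ _, touch_of_sub hT r D hsu⟩
    · intro z hz
      obtain ⟨_, hzl⟩ := Finset.mem_filter.1 hz
      refine Finset.mem_filter.2 ⟨Finset.mem_univ z, fun hd => hzl (hdeadmono z hd)⟩
  have hC'card : C'.card ≤ C.card + (w+1) :=
    le_trans (Finset.card_union_le _ _) (by have := D.size tstar; omega)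
  by_cases hRBc : ((MaxRt hT r R).filter
      (fun q => below hT r tstar q ∧ q ≠ tstar)).card ≤ 1
  · -- GAIN step
    have hgu : goodV H w u := good_center hT r D R tstar hmax hRBc hlu hsu
    have hgv : goodV H w v' := good_center hT r D R tstar hmax hRBc hlv hsv
    have hdu : DeadP B hT r R' u :=
      ⟨tstar, Finset.mem_insert_self _ _, touch_of_sub hT r D hsu⟩
    have hdv : DeadP B hT r R' v' :=
      ⟨tstar, Finset.mem_insert_self _ _, touch_of_sub hT r D hsv⟩
    have hcloD : ∀ z, clo H (u, v') z → DeadP B hT r R' z := by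
      rintro z (rfl | rfl | hz | hz)
      · exact hdu
      · exact hdv
      · exact ⟨tstar, Finset.mem_insert_self _ _, touch_of_sub_adj hT r D hsu hz⟩
      · exact ⟨tstar, Finset.mem_insert_self _ _, touch_of_sub_adj hT r D hsv hz⟩
    have hI2' : C'.card + (w+1) * (MaxRt hT r R').card ≤ 3*(w+1)*(((u,v')::M).length) := by
      have hm1 : (MaxRt hT r R').card ≤ (MaxRt hT r R).card + 1 :=
        le_trans (Finset.card_le_card (maxr_insert hT r)) (Finset.card_insert_le _ _)
      have hm2 : (w+1) * (MaxRt hT r R').card ≤ (w+1)*(MaxRt hT r R).card + (w+1) := by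
        calc (w+1) * (MaxRt hT r R').card ≤ (w+1) * ((MaxRt hT r R).card + 1) :=
              Nat.mul_le_mul_left _ hm1
          _ = (w+1)*(MaxRt hT r R).card + (w+1) := by ring
      simp only [List.length_cons]
      have hex : 3*(w+1)*(M.length+1) = 3*(w+1)*M.length + 3*(w+1) := by ring
      linarith [hm2, hC'card, hI2, hex]
    refine IH (Finset.univ.filter (fun z : V => ¬ DeadP B hT r R' z)).card
      (lt_of_lt_of_le hlive_dec hn) R' C' ((u,v')::M) le_rfl hI1' hI2'
      (by simp only [List.length_cons]; omega) ?_ ?_ ?_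
    · intro p hp
      rcases List.mem_cons.1 hp with rfl | hp
      · exact ⟨hauv, hgu, hgv⟩
      · exact hgood p hp
    · intro p hp z hz
      rcases List.mem_cons.1 hp with rfl | hp
      · exact hcloD z hz
      · exact hdeadmono z (hclo p hp z hz)
    · refine List.Pairwise.cons ?_ hpair
      intro q hq
      exact ⟨fun hc => hlu (hclo q hq u hc), fun hc => hlv (hclo q hq v' hc)⟩
  · -- SKIP step
    push_neg at hRBc
    have hsub2 : MaxRt hT r R' ⊆ insert tstar ((MaxRt hT r R) \
        ((MaxRt hT r R).filter (fun q => below hT r tstar q ∧ q ≠ tstar))) := by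
      intro t'' h
      rcases Finset.mem_insert.1 ((maxr_insert hT r) h) with rfl | hmem
      · exact Finset.mem_insert_self _ _
      · refine Finset.mem_insert_of_mem (Finset.mem_sdiff.2 ⟨hmem, ?_⟩)
        intro hRBmem
        have hflt := Finset.mem_filter.1 hRBmem
        obtain ⟨ht''R', hmaxi⟩ := Finset.mem_filter.1 h
        exact hflt.2.2 (hmaxi tstar (Finset.mem_insert_self _ _) hflt.2.1).symm
    have hcard2 : (MaxRt hT r R').card + 1 ≤ (MaxRt hT r R).card := by
      have h1 : (MaxRt hT r R').card ≤ ((MaxRt hT r R) \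
          ((MaxRt hT r R).filter (fun q => below hT r tstar q ∧ q ≠ tstar))).card + 1 :=
        le_trans (Finset.card_le_card hsub2) (Finset.card_insert_le _ _)
      have h2 := Finset.card_sdiff_of_subset (Finset.filter_subset
        (fun q => below hT r tstar q ∧ q ≠ tstar) (MaxRt hT r R))
      have h3 := Finset.card_le_card (Finset.filter_subset
        (fun q => below hT r tstar q ∧ q ≠ tstar) (MaxRt hT r R))
      omega
    have hI2' : C'.card + (w+1) * (MaxRt hT r R').card ≤ 3*(w+1)*M.length := by
      have hmm : (w+1) * ((MaxRt hT r R').card + 1) ≤ (w+1) * (MaxRt hT r R).card :=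
        Nat.mul_le_mul_left _ hcard2
      have hx2 : (w+1) * ((MaxRt hT r R').card + 1)
          = (w+1)*(MaxRt hT r R').card + (w+1) := by ring
      linarith [hmm, hx2, hC'card, hI2]
    exact IH _ (lt_of_lt_of_le hlive_dec hn) R' C' M le_rfl hI1' hI2' hlen hgood
      (fun p hp z hz => hdeadmono z (hclo p hp z hz)) hpair

end NiceMatching

namespace NiceMatching
open scoped Classical
variable {V : Type*} {H : SimpleGraph V}

lemma rel2_sep {p q : V × V} (h : rel2 H p q ∨ rel2 H q p) {z1 z2 : V}
    (h1 : z1 = p.1 ∨ z1 = p.2) (h2 : z2 = q.1 ∨ z2 = q.2) :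
    z1 ≠ z2 ∧ ¬ H.Adj z1 z2 := by
  have hsymAdj : ∀ a b : V, ¬ H.Adj a b → ¬ H.Adj b a := fun a b h hb => h hb.symm
  rcases h with ⟨ha, hb⟩ | ⟨ha, hb⟩
  · simp only [clo, not_or] at ha hb
    rcases h1 with rfl | rfl <;> rcases h2 with rfl | rfl
    · exact ⟨ha.1, hsymAdj _ _ ha.2.2.1⟩
    · exact ⟨ha.2.1, hsymAdj _ _ ha.2.2.2⟩
    · exact ⟨hb.1, hsymAdj _ _ hb.2.2.1⟩
    · exact ⟨hb.2.1, hsymAdj _ _ hb.2.2.2⟩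
  · simp only [clo, not_or] at ha hb
    rcases h1 with rfl | rfl <;> rcases h2 with rfl | rfl
    · exact ⟨Ne.symm ha.1, ha.2.2.1⟩
    · exact ⟨Ne.symm hb.1, hb.2.2.1⟩
    · exact ⟨Ne.symm ha.2.1, ha.2.2.2⟩
    · exact ⟨Ne.symm hb.2.1, hb.2.2.2⟩

end NiceMatching

/-- if `H` has treewidth at most `w` and every vertex cover of `H` has
size greater than `3k(w+1)`, then `H` contains an induced matching of size `k` all of
whose endpoints have `ψ ≤ 2(w+1)`, i.e., none of them is the center of a subdivided
`(2(w+1)+1)`-star. -/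
theorem nice_matching_of_treewidth {V : Type*} [Fintype V] (H : SimpleGraph V)
    (w k : ℕ) (htw : HasTreeDecompWidth H w)
    (hvc : ∀ C : Finset V, _root_.IsVertexCover H C → 3 * k * (w + 1) < C.card) :
    ∃ M : Finset (Sym2 V), IsInducedMatching H M ∧ M.card = k ∧
      ∀ e ∈ M, ∀ v, v ∈ e → ¬ HasSubdividedStar H v (2 * (w + 1) + 1) := by
  classical
  open NiceMatching in
  obtain ⟨ι, T, B, hT, hB1, hB2e, hB3, hB4⟩ := htw
  by_cases hV : Nonempty V
  swap
  · exfalso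
    have hcov : _root_.IsVertexCover H ∅ := by
      intro e he
      exfalso
      revert he
      refine e.inductionOn ?_
      intro x y _
      exact hV ⟨x⟩
    have := hvc ∅ hcov
    simp at this
  obtain ⟨v₀⟩ := hV
  obtain ⟨r, _⟩ := hB1 v₀
  -- build decomposition data
  have D : NiceMatching.TDc H w T B hT := by
    refine ⟨hB1, ?_, ?_, hB4⟩
    · intro x y hxy
      obtain ⟨t, ht⟩ := hB2e s(x, y) ((SimpleGraph.mem_edgeSet H).2 hxy)
      exact ⟨t, ht x (by simp), ht y (by simp)⟩
    · intro x s s' hs hs' u hu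
      have hc := hB3 x
      have hreach := hc.preconnected ⟨s, hs⟩ ⟨s', hs'⟩
      obtain ⟨Wind⟩ := hreach
      let F : (T.induce {t | x ∈ B t}) →g T := ⟨Subtype.val, fun {a b} hab => hab⟩
      have hsub := NiceMatching.pa_subset_support hT (Wind.map F)
      have hu2 := hsub hu
      rw [SimpleGraph.Walk.support_map] at hu2
      obtain ⟨⟨u', hu'⟩, _, rfl⟩ := List.mem_map.1 hu2
      exact hu'
  obtain ⟨M', hMlen, hMgood, hMpair⟩ := NiceMatching.process hT r D hvc
    (Finset.univ.card) ∅ ∅ []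
    (Finset.card_filter_le _ _)
    (by rintro x y _ ⟨t, ht, _⟩; simp at ht)
    (by simp [NiceMatching.MaxRt])
    (by simp) (by simp) (by simp) (List.Pairwise.nil)
  -- symmetric relation access
  have hpair' : M'.Pairwise (fun p q => NiceMatching.rel2 H p q ∨ NiceMatching.rel2 H q p) :=
    hMpair.imp Or.inl
  have hsym : ∀ ⦃p⦄, p ∈ M' → ∀ ⦃q⦄, q ∈ M' → p ≠ q →
      (NiceMatching.rel2 H p q ∨ NiceMatching.rel2 H q p) :=
    haveI : Std.Symm (fun p q => NiceMatching.rel2 H p q ∨ NiceMatching.rel2 H q p) :=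
      ⟨fun a b h => h.symm⟩
    List.Pairwise.forall hpair'
  set Mf : Finset (Sym2 V) := (M'.map (fun p => s(p.1, p.2))).toFinset with hMf
  have hmemM : ∀ {e : Sym2 V}, e ∈ Mf ↔ ∃ p ∈ M', s(p.1, p.2) = e := by
    intro e
    simp only [hMf, List.mem_toFinset, List.mem_map]
  have hnd : (M'.map (fun p => s(p.1, p.2))).Nodup := by
    refine List.Pairwise.map _ ?_ hMpair
    intro p q hrel hEq
    rcases Sym2.eq_iff.mp hEq with ⟨h, _⟩ | ⟨h, _⟩
    · exact hrel.1 (Or.inl h)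
    · exact hrel.1 (Or.inr (Or.inl h))
  have hcard : Mf.card = k := by
    rw [hMf, List.toFinset_card_of_nodup hnd, List.length_map, hMlen]
  refine ⟨Mf, ⟨⟨?_, ?_⟩, ?_⟩, hcard, ?_⟩
  · -- edges
    intro e he
    obtain ⟨p, hp, rfl⟩ := hmemM.1 he
    exact (H.mem_edgeSet).2 (hMgood p hp).1
  · -- pairwise disjoint
    intro e he f hf hef v hve hvf
    obtain ⟨p, hp, rfl⟩ := hmemM.1 he
    obtain ⟨q, hq, rfl⟩ := hmemM.1 hf
    have hpq : p ≠ q := fun h => hef (by rw [h])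
    rw [Sym2.mem_iff] at hve hvf
    exact (NiceMatching.rel2_sep (hsym hp hq hpq) hve hvf).1 rfl
  · -- induced
    intro e he hsup
    revert he hsup
    refine e.inductionOn ?_
    intro x y he hsup
    have hadj : H.Adj x y := (SimpleGraph.mem_edgeSet H).1 he
    obtain ⟨ex, hex, hxex⟩ := hsup x (by simp)
    obtain ⟨ey, hey, hyey⟩ := hsup y (by simp)
    obtain ⟨p, hp, rfl⟩ := hmemM.1 hex
    obtain ⟨q, hq, rfl⟩ := hmemM.1 hey
    rw [Sym2.mem_iff] at hxex hyey
    by_cases hpq : p = q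
    · subst hpq
      rcases hxex with rfl | rfl <;> rcases hyey with rfl | rfl
      · exact absurd rfl hadj.ne
      · exact hmemM.2 ⟨p, hp, rfl⟩
      · refine hmemM.2 ⟨p, hp, ?_⟩
        exact Sym2.eq_swap
      · exact absurd rfl hadj.ne
    · exact absurd hadj (NiceMatching.rel2_sep (hsym hp hq hpq) hxex hyey).2
  · -- no big stars
    intro e he v hv
    obtain ⟨p, hp, rfl⟩ := hmemM.1 he
    rw [Sym2.mem_iff] at hv
    rcases hv with rfl | rfl
    · exact (hMgood p hp).2.1
    · exact (hMgood p hp).2.2
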